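/- arXiv:1412.2853 — 8 statements merged into one kernel-verified Lean document; each statement's English description precedes it below -/
import Mathlib

section
/- Let H be a real Hilbert space and (f_j)_{j∈ℕ} a Hilbert basis (complete orthonormal family) of H. Let (e_j)_{j∈ℕ} be a family of vectors in H and C* > 0 a constant such that ‖e_0 − f_0‖ ≤ C*, and for every integer j ≥ 1, ‖e_{2j} − f_{2j}‖ ≤ C*/j and ‖e_{2j−1} − f_{2j−1}‖ ≤ C*/j. Assume C*·√(1 + π²/3) < 1. Then the map L : H → H defined by L(v) = Σ_{j=0}^∞ ⟨f_j, v⟩ e_j (the series converging in H for every v) is a well-defined bounded linear operator satisfying ‖L − Id‖ ≤ C*·√(1 + π²/3) < 1; in particular L is a bounded invertible operator (a continuous linear equivalence of H onto itself). -/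
open scoped InnerProductSpace RealInnerProductSpace

/-!
Write `L = Id + T` with `T v = ∑ ⟪f j, v⟫ (e j - f j)`. By Cauchy–Schwarz and Parseval,
`‖T v‖ ≤ (∑ ‖e j - f j‖²)^{1/2} ‖v‖`, and the hypotheses bound `∑ ‖e j - f j‖²` by
`C*² (1 + 2 ζ(2)) = C*² (1 + π²/3)`, since each `1/j²` is used twice (for `2j` and `2j - 1`).
So `‖L - Id‖ < 1`, and `L` is invertible by the Neumann series.
-/

theorem summable_mul_and_tsum_mul_le_sqrt {ι : Type*} {a b : ι → ℝ} (ha : ∀ i, 0 ≤ a i)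
    (hb : ∀ i, 0 ≤ b i) (ha₂ : Summable fun i => a i ^ 2) (hb₂ : Summable fun i => b i ^ 2) :
    Summable (fun i => a i * b i) ∧
      ∑' i, a i * b i ≤ √(∑' i, a i ^ 2) * √(∑' i, b i ^ 2) := by
  have := Real.summable_and_inner_le_Lp_mul_Lq_tsum_of_nonneg .two_two ha hb
    (by simpa using ha₂) (by simpa using hb₂)
  simpa [Real.sqrt_eq_rpow] using this

theorem exists_continuousLinearEquiv_of_norm_sub_id_lt_one {𝕜 E : Type*}
    [NontriviallyNormedField 𝕜] [NormedAddCommGroup E] [NormedSpace 𝕜 E] [CompleteSpace E]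
    (L : E →L[𝕜] E) (hL : ‖L - ContinuousLinearMap.id 𝕜 E‖ < 1) :
    ∃ L' : E ≃L[𝕜] E, (L' : E →L[𝕜] E) = L := by
  obtain ⟨u, rfl⟩ : IsUnit L := by
    by_contra h
    exact nonunits.subset_compl_ball h (mem_ball_iff_norm.mpr hL)
  exact ⟨ContinuousLinearEquiv.unitsEquiv 𝕜 E u, rfl⟩

namespace HilbertBasis

variable {ι 𝕜 E F : Type*} [RCLike 𝕜] [NormedAddCommGroup E] [InnerProductSpace 𝕜 E]
  [NormedAddCommGroup F] [NormedSpace 𝕜 F] (b : HilbertBasis ι 𝕜 E) {d : ι → F}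

theorem hasSum_norm_inner_sq (v : E) : HasSum (fun i => ‖⟪b i, v⟫_𝕜‖ ^ 2) (‖v‖ ^ 2) := by
  simpa [b.repr_apply_apply] using lp.hasSum_norm (p := 2) (by norm_num) (b.repr v)

theorem summable_norm_inner_smul (hd : Summable fun i => ‖d i‖ ^ 2) (v : E) :
    Summable fun i => ‖⟪b i, v⟫_𝕜 • d i‖ := by
  simpa only [norm_smul] using (summable_mul_and_tsum_mul_le_sqrt (fun _ => norm_nonneg _)
    (fun _ => norm_nonneg _) (b.hasSum_norm_inner_sq v).summable hd).1

theorem tsum_norm_inner_smul_le (hd : Summable fun i => ‖d i‖ ^ 2) (v : E) :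
    ∑' i, ‖⟪b i, v⟫_𝕜 • d i‖ ≤ √(∑' i, ‖d i‖ ^ 2) * ‖v‖ := by
  have := (summable_mul_and_tsum_mul_le_sqrt (fun _ => norm_nonneg _)
    (fun _ => norm_nonneg _) (b.hasSum_norm_inner_sq v).summable hd).2
  rw [(b.hasSum_norm_inner_sq v).tsum_eq, Real.sqrt_sq (norm_nonneg v)] at this
  simpa only [norm_smul, mul_comm ‖v‖] using this

variable [CompleteSpace F]

/-- The bounded operator sending `b i` to `d i`. -/
noncomputable def constr (hd : Summable fun i => ‖d i‖ ^ 2) : E →L[𝕜] F :=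
  LinearMap.mkContinuous
    { toFun := fun v => ∑' i, ⟪b i, v⟫_𝕜 • d i
      map_add' := fun v w => by
        simp only [inner_add_right, add_smul]
        exact (b.summable_norm_inner_smul hd v).of_norm.tsum_add
          (b.summable_norm_inner_smul hd w).of_norm
      map_smul' := fun c v => by
        simp only [inner_smul_right, mul_smul, RingHom.id_apply]
        exact (b.summable_norm_inner_smul hd v).of_norm.tsum_const_smul c }
    (√(∑' i, ‖d i‖ ^ 2))
    fun v => (norm_tsum_le_tsum_norm (b.summable_norm_inner_smul hd v)).trans
      (b.tsum_norm_inner_smul_le hd v)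

theorem hasSum_constr (hd : Summable fun i => ‖d i‖ ^ 2) (v : E) :
    HasSum (fun i => ⟪b i, v⟫_𝕜 • d i) (b.constr hd v) :=
  (b.summable_norm_inner_smul hd v).of_norm.hasSum

theorem norm_constr_le (hd : Summable fun i => ‖d i‖ ^ 2) :
    ‖b.constr hd‖ ≤ √(∑' i, ‖d i‖ ^ 2) :=
  LinearMap.mkContinuous_norm_le _ (Real.sqrt_nonneg _) _

end HilbertBasis

/-- The term `n = 0` vanishes, since `((0 + 1) / 2 : ℕ) = 0` and `1 / 0 = 0`. -/
theorem hasSum_one_div_sq_succ_div_two :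
    HasSum (fun n : ℕ => 1 / (((n + 1) / 2 : ℕ) : ℝ) ^ 2) (Real.pi ^ 2 / 3) := by
  have heven : HasSum (fun k : ℕ => 1 / (((2 * k + 1) / 2 : ℕ) : ℝ) ^ 2) (Real.pi ^ 2 / 6) := by
    simp only [show ∀ k : ℕ, (2 * k + 1) / 2 = k by omega]
    exact hasSum_zeta_two
  have hodd : HasSum (fun k : ℕ => 1 / (((2 * k + 1 + 1) / 2 : ℕ) : ℝ) ^ 2)
      (Real.pi ^ 2 / 6) := by
    simp only [show ∀ k : ℕ, (2 * k + 1 + 1) / 2 = k + 1 by omega]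
    simpa using (hasSum_nat_add_iff' 1).mpr hasSum_zeta_two
  convert heven.even_add_odd (f := fun n : ℕ => 1 / (((n + 1) / 2 : ℕ) : ℝ) ^ 2) hodd using 1
  ring

section PairedDecay

variable {F : Type*} [SeminormedAddCommGroup F] {d : ℕ → F} {C : ℝ}

theorem norm_sq_le_of_paired_decay (h0 : ‖d 0‖ ≤ C)
    (heven : ∀ j : ℕ, 1 ≤ j → ‖d (2 * j)‖ ≤ C / j)
    (hodd : ∀ j : ℕ, 1 ≤ j → ‖d (2 * j - 1)‖ ≤ C / j) (n : ℕ) :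
    ‖d n‖ ^ 2 ≤ C ^ 2 * ((if n = 0 then 1 else 0) + 1 / (((n + 1) / 2 : ℕ) : ℝ) ^ 2) := by
  have hle : ‖d n‖ ≤ C * (if n = 0 then 1 else 1 / (((n + 1) / 2 : ℕ) : ℝ)) := by
    obtain ⟨k, rfl | rfl⟩ := Nat.even_or_odd' n
    · rcases Nat.eq_zero_or_pos k with rfl | hk
      · simpa using h0
      · simpa [show (2 * k + 1) / 2 = k by omega, hk.ne', div_eq_mul_inv] using heven k hk
    · have h := hodd (k + 1) (by omega)
      rw [show 2 * (k + 1) - 1 = 2 * k + 1 by omega] at h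
      simpa [show (2 * k + 1 + 1) / 2 = k + 1 by omega, div_eq_mul_inv] using h
  calc ‖d n‖ ^ 2 ≤ (C * (if n = 0 then 1 else 1 / (((n + 1) / 2 : ℕ) : ℝ))) ^ 2 :=
        pow_le_pow_left₀ (norm_nonneg _) hle 2
    _ = C ^ 2 * ((if n = 0 then 1 else 0) + 1 / (((n + 1) / 2 : ℕ) : ℝ) ^ 2) := by
        split_ifs with hn <;> simp [hn, mul_pow]

theorem summable_and_tsum_norm_sq_le_of_paired_decay (h0 : ‖d 0‖ ≤ C)
    (heven : ∀ j : ℕ, 1 ≤ j → ‖d (2 * j)‖ ≤ C / j)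
    (hodd : ∀ j : ℕ, 1 ≤ j → ‖d (2 * j - 1)‖ ≤ C / j) :
    Summable (fun n => ‖d n‖ ^ 2) ∧ ∑' n, ‖d n‖ ^ 2 ≤ C ^ 2 * (1 + Real.pi ^ 2 / 3) := by
  have hmajor := ((hasSum_ite_eq 0 (1 : ℝ)).add hasSum_one_div_sq_succ_div_two).mul_left (C ^ 2)
  have hle := norm_sq_le_of_paired_decay h0 heven hodd
  have hsum : Summable (fun n => ‖d n‖ ^ 2) :=
    hmajor.summable.of_nonneg_of_le (fun _ => by positivity) hle
  exact ⟨hsum, hasSum_le hle hsum.hasSum hmajor⟩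

end PairedDecay

theorem stmt0_general {H : Type*} [NormedAddCommGroup H] [InnerProductSpace ℝ H] [CompleteSpace H]
    (f : HilbertBasis ℕ ℝ H) (e : ℕ → H) (Cs : ℝ)
    (h0 : ‖e 0 - f 0‖ ≤ Cs)
    (heven : ∀ j : ℕ, 1 ≤ j → ‖e (2 * j) - f (2 * j)‖ ≤ Cs / j)
    (hodd : ∀ j : ℕ, 1 ≤ j → ‖e (2 * j - 1) - f (2 * j - 1)‖ ≤ Cs / j)
    (hsmall : Cs * Real.sqrt (1 + Real.pi ^ 2 / 3) < 1) :
    ∃ L : H →L[ℝ] H,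
      (∀ v : H, HasSum (fun j : ℕ => ⟪(f j : H), v⟫ • e j) (L v)) ∧
      ‖L - ContinuousLinearMap.id ℝ H‖ ≤ Cs * Real.sqrt (1 + Real.pi ^ 2 / 3) ∧
      ∃ L' : H ≃L[ℝ] H, (L' : H →L[ℝ] H) = L := by
  obtain ⟨hsum, htsum⟩ := summable_and_tsum_norm_sq_le_of_paired_decay
    (d := fun j => e j - f j) h0 heven hodd
  set T := f.constr hsum
  have hCs : 0 ≤ Cs := (norm_nonneg _).trans h0
  have hT : ‖T‖ ≤ Cs * √(1 + Real.pi ^ 2 / 3) :=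
    calc ‖T‖ ≤ √(∑' j, ‖e j - f j‖ ^ 2) := f.norm_constr_le hsum
      _ ≤ √(Cs ^ 2 * (1 + Real.pi ^ 2 / 3)) := Real.sqrt_le_sqrt htsum
      _ = Cs * √(1 + Real.pi ^ 2 / 3) := by rw [Real.sqrt_mul' _ (by positivity),
          Real.sqrt_sq hCs]
  have hLT : ContinuousLinearMap.id ℝ H + T - ContinuousLinearMap.id ℝ H = T := by abel
  refine ⟨ContinuousLinearMap.id ℝ H + T, fun v => ?_, by rwa [hLT],
    exists_continuousLinearEquiv_of_norm_sub_id_lt_one _ (by rw [hLT]; exact hT.trans_lt hsmall)⟩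
  convert (f.hasSum_repr v).add (f.hasSum_constr hsum v) using 1
  · ext j
    rw [f.repr_apply_apply, ← smul_add, add_sub_cancel]
  · rfl

/-- Abstract core of Proposition 7.1: if the family `(e_j)` satisfies `‖e_0 − f_0‖ ≤ C*`,
`‖e_{2j} − f_{2j}‖ ≤ C*/j` and `‖e_{2j−1} − f_{2j−1}‖ ≤ C*/j` for `j ≥ 1`, with
`C*·√(1+π²/3) < 1`, then `L v = ∑ ⟪f_j, v⟫ e_j` defines a bounded operator with
`‖L − Id‖ ≤ C*·√(1+π²/3) < 1`; in particular `L` is a bounded invertible operator. -/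
theorem stmt0 {H : Type*} [NormedAddCommGroup H] [InnerProductSpace ℝ H] [CompleteSpace H]
    (f : HilbertBasis ℕ ℝ H) (e : ℕ → H) (Cs : ℝ) (hCs : 0 < Cs)
    (h0 : ‖e 0 - f 0‖ ≤ Cs)
    (heven : ∀ j : ℕ, 1 ≤ j → ‖e (2 * j) - f (2 * j)‖ ≤ Cs / j)
    (hodd : ∀ j : ℕ, 1 ≤ j → ‖e (2 * j - 1) - f (2 * j - 1)‖ ≤ Cs / j)
    (hsmall : Cs * Real.sqrt (1 + Real.pi ^ 2 / 3) < 1) :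
    ∃ L : H →L[ℝ] H,
      (∀ v : H, HasSum (fun j : ℕ => ⟪(f j : H), v⟫ • e j) (L v)) ∧
      ‖L - ContinuousLinearMap.id ℝ H‖ ≤ Cs * Real.sqrt (1 + Real.pi ^ 2 / 3) ∧
      ∃ L' : H ≃L[ℝ] H, (L' : H →L[ℝ] H) = L :=
  stmt0_general f e Cs h0 heven hodd hsmall
end

section
/- Let H be a real Hilbert space and (f_j)_{j∈ℕ} a Hilbert basis (complete orthonormal family) of H. Let (e_j)_{j∈ℕ} be a family of vectors in H such that S² := Σ_{j=0}^∞ ‖e_j − f_j‖² < ∞. Then for every v ∈ H the series Σ_{j=0}^∞ ⟨f_j, v⟩ e_j converges in H, the resulting map L : H → H is a bounded linear operator, and ‖L − Id‖ ≤ S, where ‖·‖ on operators is the operator norm. -/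
open scoped RealInnerProductSpace

/-- Key estimate in the proof of Proposition 7.1: a family `(e_j)` that is ℓ²-close to a
Hilbert basis `(f_j)` (with `∑ ‖e_j − f_j‖² = S²`) defines a bounded operator
`L v = ∑ ⟪f_j, v⟫ e_j` with `‖L − Id‖ ≤ S`. -/
theorem stmt1 {H : Type*} [NormedAddCommGroup H] [InnerProductSpace ℝ H] [CompleteSpace H]
    (f : HilbertBasis ℕ ℝ H) (e : ℕ → H) (S : ℝ) (hS : 0 ≤ S)
    (hsum : HasSum (fun j : ℕ => ‖e j - f j‖ ^ 2) (S ^ 2)) :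
    ∃ L : H →L[ℝ] H,
      (∀ v : H, HasSum (fun j : ℕ => ⟪(f j : H), v⟫ • e j) (L v)) ∧
      ‖L - ContinuousLinearMap.id ℝ H‖ ≤ S := by
  classical
  set g : ℕ → H := fun j => e j - f j with hgdef
  have hg2 : Summable fun j => ‖g j‖ ^ 2 := hsum.summable
  have ha2 : ∀ v : H, HasSum (fun j => ⟪(f j : H), v⟫ ^ 2) (‖v‖ ^ 2) := by
    intro v
    have h := f.hasSum_inner_mul_inner v v
    have : (fun j => ⟪v, (f j : H)⟫ * ⟪(f j : H), v⟫) = fun j => ⟪(f j : H), v⟫ ^ 2 := by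
      funext j; rw [real_inner_comm v (f j)]; ring
    rw [this] at h
    simpa [real_inner_self_eq_norm_sq] using h
  have hnorm : ∀ v : H, Summable fun j => ‖⟪(f j : H), v⟫ • g j‖ := by
    intro v
    refine Summable.of_nonneg_of_le (fun j => norm_nonneg _) (fun j => ?_)
      (((ha2 v).summable.add hg2).div_const 2)
    rw [norm_smul]
    have h1 : ‖⟪(f j : H), v⟫‖ = |⟪(f j : H), v⟫| := rfl
    nlinarith [sq_nonneg (|⟪(f j : H), v⟫| - ‖g j‖), abs_nonneg ⟪(f j : H), v⟫,
      norm_nonneg (g j), sq_abs ⟪(f j : H), v⟫]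
  have hsumm : ∀ v : H, Summable fun j => ⟪(f j : H), v⟫ • g j :=
    fun v => (hnorm v).of_norm
  -- the tsum bound
  have hbound : ∀ v : H, ‖∑' j, ⟪(f j : H), v⟫ • g j‖ ≤ S * ‖v‖ := by
    intro v
    refine (norm_tsum_le_tsum_norm (hnorm v)).trans ?_
    refine Summable.tsum_le_of_sum_le (hnorm v) fun s => ?_
    have hcs : ∑ j ∈ s, ‖⟪(f j : H), v⟫ • g j‖
        ≤ Real.sqrt (∑ j ∈ s, ⟪(f j : H), v⟫ ^ 2) * Real.sqrt (∑ j ∈ s, ‖g j‖ ^ 2) := by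
      have := Real.sum_mul_le_sqrt_mul_sqrt s (fun j => |⟪(f j : H), v⟫|) (fun j => ‖g j‖)
      simpa [norm_smul, sq_abs, Real.norm_eq_abs] using this
    refine hcs.trans ?_
    have h1 : ∑ j ∈ s, ⟪(f j : H), v⟫ ^ 2 ≤ ‖v‖ ^ 2 :=
      Summable.sum_le_tsum s (fun j _ => sq_nonneg _) ((ha2 v).summable) |>.trans_eq (ha2 v).tsum_eq
    have h2 : ∑ j ∈ s, ‖g j‖ ^ 2 ≤ S ^ 2 :=
      Summable.sum_le_tsum s (fun j _ => sq_nonneg _) hg2 |>.trans_eq hsum.tsum_eq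
    calc Real.sqrt (∑ j ∈ s, ⟪(f j : H), v⟫ ^ 2) * Real.sqrt (∑ j ∈ s, ‖g j‖ ^ 2)
        ≤ Real.sqrt (‖v‖ ^ 2) * Real.sqrt (S ^ 2) :=
          mul_le_mul (Real.sqrt_le_sqrt h1) (Real.sqrt_le_sqrt h2)
            (Real.sqrt_nonneg _) (Real.sqrt_nonneg _)
      _ = S * ‖v‖ := by
          rw [Real.sqrt_sq (norm_nonneg v), Real.sqrt_sq hS, mul_comm]
  -- linear map T v = ∑' ⟪f j, v⟫ • g j
  let T : H →ₗ[ℝ] H :=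
    { toFun := fun v => ∑' j, ⟪(f j : H), v⟫ • g j
      map_add' := by
        intro v w
        have he : (fun j => ⟪(f j : H), v + w⟫ • g j)
            = fun j => ⟪(f j : H), v⟫ • g j + ⟪(f j : H), w⟫ • g j := by
          funext j; rw [inner_add_right, add_smul]
        rw [he]
        exact ((hsumm v).hasSum.add (hsumm w).hasSum).tsum_eq
      map_smul' := by
        intro c v
        simp only [RingHom.id_apply]
        have he : (fun j => ⟪(f j : H), c • v⟫ • g j)
            = fun j => c • (⟪(f j : H), v⟫ • g j) := by
          funext j; rw [inner_smul_right, smul_smul]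
        rw [he]
        exact ((hsumm v).hasSum.const_smul c).tsum_eq }
  let Tc : H →L[ℝ] H := T.mkContinuous S (fun v => hbound v)
  refine ⟨Tc + ContinuousLinearMap.id ℝ H, fun v => ?_, ?_⟩
  · have h1 : HasSum (fun j => ⟪(f j : H), v⟫ • g j) (Tc v) := (hsumm v).hasSum
    have h2 : HasSum (fun j => ⟪(f j : H), v⟫ • (f j : H)) v := by
      have := f.hasSum_repr v
      simpa [f.repr_apply_apply] using this
    have h3 := h1.add h2
    have : (fun j => ⟪(f j : H), v⟫ • g j + ⟪(f j : H), v⟫ • (f j : H))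
        = fun j => ⟪(f j : H), v⟫ • e j := by
      funext j; rw [← smul_add]; congr 1; simp [hgdef]
    rw [this] at h3
    simpa using h3
  · have : Tc + ContinuousLinearMap.id ℝ H - ContinuousLinearMap.id ℝ H = Tc := by
      abel
    rw [this]
    exact Tc.opNorm_le_bound hS hbound
end

section
/- Let A, B, A′, B′ be points of the Euclidean plane ℝ² and ε ≥ 0. Assume ‖A − A′‖ ≤ ε, ‖B − B′‖ ≤ ε, and ‖A′ − B′‖ > 2ε. Then the vectors B − A and B′ − A′ are nonzero and the undirected angle between them satisfies ∠(B − A, B′ − A′) ≤ 2ε/(‖A′ − B′‖ − 2ε). -/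
/-!
Write `u = B - A` and `v = B' - A'`, so that `‖u - v‖ ≤ 2ε < ‖v‖`. For `θ = ∠(u, v)`, the
component of `u` orthogonal to `v` has length `sin θ ‖u‖ ≤ ‖u - v‖`, while its component along
`v` has length `cos θ ‖u‖ ≥ ‖v‖ - ‖u - v‖ > 0`. Hence `θ < π/2` and
`θ ≤ tan θ ≤ 2ε / (‖v‖ - 2ε)`.
-/

open Real
open scoped RealInnerProductSpace

namespace InnerProductGeometry

variable {V : Type*} [NormedAddCommGroup V] [InnerProductSpace ℝ V]

theorem sin_angle_mul_norm_le_norm_sub (u v : V) : sin (angle u v) * ‖u‖ ≤ ‖u - v‖ := by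
  rcases eq_or_ne v 0 with rfl | hv
  · simp
  have hv' : 0 < ‖v‖ := norm_pos_iff.mpr hv
  -- `‖u - v‖²‖v‖² - (‖u‖²‖v‖² - ⟪u, v⟫²) = (‖v‖² - ⟪u, v⟫)²`
  have hgram : ⟪u, u⟫ * ⟪v, v⟫ - ⟪u, v⟫ * ⟪u, v⟫ ≤ (‖u - v‖ * ‖v‖) ^ 2 := by
    rw [real_inner_self_eq_norm_sq, real_inner_self_eq_norm_sq, mul_pow, norm_sub_sq_real]
    nlinarith [sq_nonneg (‖v‖ ^ 2 - ⟪u, v⟫)]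
  have key : sin (angle u v) * ‖u‖ * ‖v‖ ≤ ‖u - v‖ * ‖v‖ := by
    calc sin (angle u v) * ‖u‖ * ‖v‖
        = √(⟪u, u⟫ * ⟪v, v⟫ - ⟪u, v⟫ * ⟪u, v⟫) := by
          rw [mul_assoc, sin_angle_mul_norm_mul_norm]
      _ ≤ √((‖u - v‖ * ‖v‖) ^ 2) := sqrt_le_sqrt hgram
      _ = ‖u - v‖ * ‖v‖ := sqrt_sq (by positivity)
  exact le_of_mul_le_mul_right key hv'

theorem norm_sub_norm_sub_le_cos_angle_mul_norm (u v : V) :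
    ‖v‖ - ‖u - v‖ ≤ cos (angle u v) * ‖u‖ := by
  rcases eq_or_ne v 0 with rfl | hv
  · simp
  have hv' : 0 < ‖v‖ := norm_pos_iff.mpr hv
  have key : (‖v‖ - ‖u - v‖) * ‖v‖ ≤ cos (angle u v) * ‖u‖ * ‖v‖ := by
    calc (‖v‖ - ‖u - v‖) * ‖v‖ = ‖v‖ ^ 2 - ‖u - v‖ * ‖v‖ := by ring
      _ ≤ ⟪v, v⟫ + ⟪u - v, v⟫ := by
          rw [real_inner_self_eq_norm_sq]
          linarith [neg_abs_le ⟪u - v, v⟫, abs_real_inner_le_norm (u - v) v]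
      _ = cos (angle u v) * ‖u‖ * ‖v‖ := by
          rw [mul_assoc, cos_angle_mul_norm_mul_norm, inner_sub_left]
          ring
  exact le_of_mul_le_mul_right key hv'

theorem angle_le_div_of_norm_sub_le {u v : V} {δ : ℝ} (huv : ‖u - v‖ ≤ δ) (hδ : δ < ‖v‖) :
    angle u v ≤ δ / (‖v‖ - δ) := by
  set θ := angle u v
  have hgap : 0 < ‖v‖ - δ := sub_pos.mpr hδ
  have hsin : sin θ * ‖u‖ ≤ δ := (sin_angle_mul_norm_le_norm_sub u v).trans huv
  have hcos : ‖v‖ - δ ≤ cos θ * ‖u‖ := by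
    linarith [norm_sub_norm_sub_le_cos_angle_mul_norm u v]
  have hu : 0 < ‖u‖ := by linarith [norm_sub_norm_le v u, norm_sub_rev u v]
  have hcos_pos : 0 < cos θ := pos_of_mul_pos_left (hgap.trans_le hcos) hu.le
  have hθ : θ < π / 2 := by
    by_contra! h
    linarith [cos_nonpos_of_pi_div_two_le_of_le h (by linarith [angle_le_pi u v, pi_pos])]
  calc θ ≤ tan θ := le_tan (angle_nonneg u v) hθ
    _ = sin θ * ‖u‖ / (cos θ * ‖u‖) := by rw [tan_eq_sin_div_cos, mul_div_mul_right _ _ hu.ne']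
    _ ≤ δ / (‖v‖ - δ) := div_le_div₀ ((norm_nonneg _).trans huv) hsin hgap hcos

end InnerProductGeometry

theorem stmt3_general (A B A' B' : EuclideanSpace ℝ (Fin 2)) (ε : ℝ)
    (hA : ‖A - A'‖ ≤ ε) (hB : ‖B - B'‖ ≤ ε) (hl : 2 * ε < ‖A' - B'‖) :
    B - A ≠ 0 ∧ B' - A' ≠ 0 ∧
      InnerProductGeometry.angle (B - A) (B' - A') ≤ 2 * ε / (‖A' - B'‖ - 2 * ε) := by
  rw [norm_sub_rev] at hl ⊢
  have hdiff : ‖(B - A) - (B' - A')‖ ≤ 2 * ε := by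
    calc ‖(B - A) - (B' - A')‖ = ‖(B - B') - (A - A')‖ := by congr 1; abel
      _ ≤ ‖B - B'‖ + ‖A - A'‖ := norm_sub_le _ _
      _ ≤ 2 * ε := by linarith
  have hu : ‖B' - A'‖ - 2 * ε ≤ ‖B - A‖ := by
    linarith [norm_sub_norm_le (B' - A') (B - A), norm_sub_rev (B - A) (B' - A')]
  refine ⟨?_, ?_, InnerProductGeometry.angle_le_div_of_norm_sub_le hdiff hl⟩
  · exact norm_pos_iff.mp (by linarith)
  · exact norm_pos_iff.mp (by linarith [norm_nonneg ((B - A) - (B' - A'))])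

/-- Geometric estimate underlying Lemma 4.2: if the endpoints of a segment are moved by
at most `ε` and the new segment has length `> 2ε`, then the two segments are nondegenerate
and the undirected angle between them is at most `2ε/(‖A′−B′‖−2ε)`. -/
theorem stmt3 (A B A' B' : EuclideanSpace ℝ (Fin 2)) (ε : ℝ) (hε : 0 ≤ ε)
    (hA : ‖A - A'‖ ≤ ε) (hB : ‖B - B'‖ ≤ ε) (hl : 2 * ε < ‖A' - B'‖) :
    B - A ≠ 0 ∧ B' - A' ≠ 0 ∧
      InnerProductGeometry.angle (B - A) (B' - A') ≤ 2 * ε / (‖A' - B'‖ - 2 * ε) :=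
  stmt3_general A B A' B' ε hA hB hl
end

section
/- Let P, Q, P′, Q′ be points of the Euclidean plane ℝ². Set l = ‖Q − P‖, l′ = ‖Q′ − P′‖, v₁ = ‖P′ − P‖, v₂ = ‖Q′ − Q‖. Let β be the undirected angle between the vectors P′ − P and Q − P, and γ the undirected angle between the vectors Q′ − Q and P − Q (with the convention that the angle equals π/2 if one of the two vectors is zero). Assume l > 0 and v₁ + v₂ ≤ l/2. Then |l′ − l + v₁·cos β + v₂·cos γ| ≤ 10 (v₁² + v₂²)/l. -/
/-!
Write `u = Q - P`, `a = P' - P`, `b = Q' - Q`, so that `Q' - P' = u + (b - a)`. Each term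
`‖a‖ cos ∠(a, u)` is the projection `⟪a, u⟫ / ‖u‖`, so the quantity to bound is the error of the
first-order expansion `‖u + w‖ ≈ ‖u‖ + ⟪u, w⟫ / ‖u‖` at `w = b - a`. Expanding
`‖u + w‖² = ‖u‖² + 2 ⟪u, w⟫ + ‖w‖²` and using `|‖u + w‖ - ‖u‖| ≤ ‖w‖` bounds that error by
`2 ‖w‖² / ‖u‖ ≤ 4 (‖a‖² + ‖b‖²) / ‖u‖`.
-/

open InnerProductGeometry RealInnerProductSpace

variable {E : Type*} [NormedAddCommGroup E] [InnerProductSpace ℝ E]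

lemma norm_mul_cos_angle (a u : E) : ‖a‖ * Real.cos (angle a u) = ⟪a, u⟫ / ‖u‖ := by
  rcases eq_or_ne u 0 with rfl | hu
  · simp
  · rw [eq_div_iff (norm_ne_zero_iff.2 hu), mul_right_comm, ← cos_angle_mul_norm_mul_norm]
    ring

lemma abs_norm_add_sub_norm_sub_inner_div_le {u : E} (hu : u ≠ 0) (w : E) :
    |‖u + w‖ - ‖u‖ - ⟪u, w⟫ / ‖u‖| ≤ 2 * ‖w‖ ^ 2 / ‖u‖ := by
  have hl : 0 < ‖u‖ := norm_pos_iff.2 hu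
  have hsq : ‖u + w‖ ^ 2 = ‖u‖ ^ 2 + 2 * ⟪u, w⟫ + ‖w‖ ^ 2 := norm_add_sq_real u w
  have ht : |⟪u, w⟫| ≤ ‖u‖ * ‖w‖ := abs_real_inner_le_norm u w
  have hsl : |‖u‖ - ‖u + w‖| ≤ ‖w‖ := by
    simpa [abs_sub_comm] using abs_norm_sub_norm_le (u + w) u
  set s := ‖u + w‖
  set l := ‖u‖
  set t := ⟪u, w⟫
  have hs : 0 ≤ s := norm_nonneg _
  have hnum : |l * (s - l) - t| * (s + l) ≤ 2 * ‖w‖ ^ 2 * l := by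
    rw [← abs_of_nonneg (by positivity : 0 ≤ s + l), ← abs_mul]
    calc |(l * (s - l) - t) * (s + l)|
        = |t * (l - s) + l * ‖w‖ ^ 2| := by congr 1; linear_combination l * hsq
      _ ≤ |t| * |l - s| + l * ‖w‖ ^ 2 := by
        grw [abs_add_le, abs_mul, abs_of_nonneg (by positivity : 0 ≤ l * ‖w‖ ^ 2)]
      _ ≤ l * ‖w‖ * ‖w‖ + l * ‖w‖ ^ 2 := by gcongr
      _ = 2 * ‖w‖ ^ 2 * l := by ring
  have hdiff : |l * (s - l) - t| ≤ 2 * ‖w‖ ^ 2 := by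
    refine le_of_mul_le_mul_right ?_ hl
    grw [← hnum]
    gcongr
    linarith
  rw [show s - l - t / l = (l * (s - l) - t) / l by field_simp, abs_div, abs_of_pos hl]
  gcongr

theorem stmt4_general (P Q P' Q' : EuclideanSpace ℝ (Fin 2))
    (hl : 0 < ‖Q - P‖) :
    |‖Q' - P'‖ - ‖Q - P‖
        + ‖P' - P‖ * Real.cos (InnerProductGeometry.angle (P' - P) (Q - P))
        + ‖Q' - Q‖ * Real.cos (InnerProductGeometry.angle (Q' - Q) (P - Q))|
      ≤ 10 * (‖P' - P‖ ^ 2 + ‖Q' - Q‖ ^ 2) / ‖Q - P‖ := by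
  set u := Q - P
  set a := P' - P
  set b := Q' - Q
  have hu : u ≠ 0 := norm_pos_iff.1 hl
  have hQ'P' : Q' - P' = u + (b - a) := by simp only [u, a, b]; abel
  have hPQ : P - Q = -u := (neg_sub Q P).symm
  have hexpansion :
      ‖Q' - P'‖ - ‖u‖ + ‖a‖ * Real.cos (angle a u) + ‖b‖ * Real.cos (angle b (P - Q))
        = ‖u + (b - a)‖ - ‖u‖ - ⟪u, b - a⟫ / ‖u‖ := by
    rw [hQ'P', hPQ, norm_mul_cos_angle, norm_mul_cos_angle, norm_neg, inner_neg_right,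
      inner_sub_right u b a, real_inner_comm u a, real_inner_comm u b]
    ring
  have hba : ‖b - a‖ ^ 2 ≤ 2 * (‖a‖ ^ 2 + ‖b‖ ^ 2) := by
    nlinarith [norm_sub_le b a, norm_nonneg (b - a), sq_nonneg (‖a‖ - ‖b‖)]
  rw [hexpansion]
  calc _ ≤ 2 * ‖b - a‖ ^ 2 / ‖u‖ := abs_norm_add_sub_norm_sub_inner_div_le hu (b - a)
    _ ≤ 10 * (‖a‖ ^ 2 + ‖b‖ ^ 2) / ‖u‖ := by
      gcongr ?_ / _
      linarith [sq_nonneg ‖a‖, sq_nonneg ‖b‖]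

/-- Lemma 4.4 (first-order change of the length of one edge of an inscribed polygon):
with `l = ‖Q−P‖`, `l′ = ‖Q′−P′‖`, `v₁ = ‖P′−P‖`, `v₂ = ‖Q′−Q‖`, `β` the angle between
`P′−P` and `Q−P`, and `γ` the angle between `Q′−Q` and `P−Q`, if `l > 0` and
`v₁ + v₂ ≤ l/2`, then `|l′ − l + v₁ cos β + v₂ cos γ| ≤ 10(v₁² + v₂²)/l`.
(Mathlib's `InnerProductGeometry.angle` equals `π/2` when one vector vanishes.) -/
theorem stmt4 (P Q P' Q' : EuclideanSpace ℝ (Fin 2))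
    (hl : 0 < ‖Q - P‖) (hsmall : ‖P' - P‖ + ‖Q' - Q‖ ≤ ‖Q - P‖ / 2) :
    |‖Q' - P'‖ - ‖Q - P‖
        + ‖P' - P‖ * Real.cos (InnerProductGeometry.angle (P' - P) (Q - P))
        + ‖Q' - Q‖ * Real.cos (InnerProductGeometry.angle (Q' - Q) (P - Q))|
      ≤ 10 * (‖P' - P‖ ^ 2 + ‖Q' - Q‖ ^ 2) / ‖Q - P‖ :=
  stmt4_general P Q P' Q' hl
end

section
/- Let M ≥ 1 and let g, h : ℝ × ℝ → ℝ satisfy |g(x,y)| ≤ M and |h(x,y)| ≤ M for all (x,y), and be 1-periodic in the first variable: g(x+1,y) = g(x,y), h(x+1,y) = h(x,y). Then there exist an integer q₀ ≥ 3 and a constant C > 0, depending only on M, with the following property: for every integer q ≥ q₀ and all finite sequences (x_k)_{0≤k≤q}, (y_k)_{0≤k≤q} of real numbers such that for every 0 ≤ k < q one has x_{k+1} = x_k + y_k + y_k³·g(x_k, y_k) and y_{k+1} = y_k + y_k⁴·h(x_k, y_k), such that 0 < y_k and y_k² ≤ 1/(4M) for all 0 ≤ k ≤ q, and such that x_q =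 x_0 + 1 and y_q = y_0, one has for all 0 ≤ k < q: |y_k − 1/q| < C/q³ and |x_k − x_0 − k/q| < C/q². -/
set_option maxHeartbeats 1000000 in
/-- Lemma 5.2 (Lazutkin normal form estimate): for maps of the form
`(x,y) ↦ (x + y + y³g(x,y), y + y⁴h(x,y))` with `g, h` bounded by `M` and 1-periodic in
`x`, any periodic orbit of rotation number `1/q` with small positive `y` satisfies
`|y_k − 1/q| < C/q³` and `|x_k − x_0 − k/q| < C/q²`. -/
theorem stmt8 (M : ℝ) (hM : 1 ≤ M) (g h : ℝ → ℝ → ℝ)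
    (hg : ∀ x y : ℝ, |g x y| ≤ M) (hh : ∀ x y : ℝ, |h x y| ≤ M)
    (hgper : ∀ x y : ℝ, g (x + 1) y = g x y) (hhper : ∀ x y : ℝ, h (x + 1) y = h x y) :
    ∃ (q₀ : ℕ) (C : ℝ), 3 ≤ q₀ ∧ 0 < C ∧
      ∀ q : ℕ, q₀ ≤ q → ∀ x y : ℕ → ℝ,
        (∀ k : ℕ, k < q →
            x (k + 1) = x k + y k + (y k) ^ 3 * g (x k) (y k) ∧
            y (k + 1) = y k + (y k) ^ 4 * h (x k) (y k)) →
        (∀ k : ℕ, k ≤ q → 0 < y k ∧ (y k) ^ 2 ≤ 1 / (4 * M)) →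
        x q = x 0 + 1 → y q = y 0 →
        ∀ k : ℕ, k < q →
          |y k - 1 / q| < C / q ^ 3 ∧ |x k - x 0 - k / q| < C / q ^ 2 := by
  have hMpos : (0:ℝ) < M := by linarith
  refine ⟨3, 300 * M, le_refl 3, by linarith, ?_⟩
  intro q hq x y hstep hsmall hxq hyq
  have hq3 : (3:ℝ) ≤ (q:ℝ) := by exact_mod_cast hq
  have hQ : (0:ℝ) < (q:ℝ) := by linarith
  -- basic pointwise facts
  have hy0 : ∀ k, k ≤ q → 0 < y k := fun k hk => (hsmall k hk).1
  have hyM : ∀ k, k ≤ q → M * y k ^ 2 ≤ 1/4 := by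
    intro k hk
    have h2 := (hsmall k hk).2
    rw [le_div_iff₀ (by linarith : (0:ℝ) < 4*M)] at h2
    linarith
  -- telescoping for x
  have hxtel : ∀ k, k ≤ q →
      x k - x 0 = ∑ j ∈ Finset.range k, (y j + y j ^ 3 * g (x j) (y j)) := by
    intro k hk
    rw [← Finset.sum_range_sub x k]
    apply Finset.sum_congr rfl
    intro j hj
    have hjq : j < q := lt_of_lt_of_le (Finset.mem_range.mp hj) hk
    have := (hstep j hjq).1
    linarith
  -- telescoping for y
  have hytel : ∀ k, k ≤ q →
      y k - y 0 = ∑ j ∈ Finset.range k, (y j ^ 4 * h (x j) (y j)) := by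
    intro k hk
    rw [← Finset.sum_range_sub y k]
    apply Finset.sum_congr rfl
    intro j hj
    have hjq : j < q := lt_of_lt_of_le (Finset.mem_range.mp hj) hk
    have := (hstep j hjq).2
    linarith
  set S : ℝ := ∑ k ∈ Finset.range q, y k with hSdef
  set T : ℝ := ∑ k ∈ Finset.range q, y k ^ 4 with hTdef
  have hxsum : ∑ k ∈ Finset.range q, (y k + y k ^ 3 * g (x k) (y k)) = 1 := by
    rw [← hxtel q le_rfl, hxq]; ring
  -- bound on the perturbation terms
  have hgbound : ∀ k, k < q → |y k ^ 3 * g (x k) (y k)| ≤ (1/4) * y k := by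
    intro k hk
    have hy := hy0 k hk.le
    have hb := hyM k hk.le
    have hg' := hg (x k) (y k)
    rw [abs_mul, abs_of_pos (by positivity : (0:ℝ) < y k ^ 3)]
    have h1 : y k ^ 3 * |g (x k) (y k)| ≤ y k ^ 3 * M :=
      mul_le_mul_of_nonneg_left hg' (by positivity)
    nlinarith
  -- bounds on S
  have hSup : S ≤ 4/3 := by
    have hlow : ∑ k ∈ Finset.range q, (3/4) * y k ≤
        ∑ k ∈ Finset.range q, (y k + y k ^ 3 * g (x k) (y k)) := by
      apply Finset.sum_le_sum
      intro k hk
      have := abs_le.mp (hgbound k (Finset.mem_range.mp hk))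
      linarith [this.1]
    rw [hxsum, ← Finset.mul_sum] at hlow
    linarith
  have hSlow : 4/5 ≤ S := by
    have hup : ∑ k ∈ Finset.range q, (y k + y k ^ 3 * g (x k) (y k)) ≤
        ∑ k ∈ Finset.range q, (5/4) * y k := by
      apply Finset.sum_le_sum
      intro k hk
      have := abs_le.mp (hgbound k (Finset.mem_range.mp hk))
      linarith [this.2]
    rw [hxsum, ← Finset.mul_sum] at hup
    linarith
  have hSpos : 0 < S := by linarith
  -- max and min of y on range q
  have hne : (Finset.range q).Nonempty := ⟨0, Finset.mem_range.mpr (by omega)⟩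
  obtain ⟨a, ha, hmax⟩ := Finset.exists_max_image (Finset.range q) y hne
  obtain ⟨b, hb, hmin⟩ := Finset.exists_min_image (Finset.range q) y hne
  have haq : a < q := Finset.mem_range.mp ha
  have hbq : b < q := Finset.mem_range.mp hb
  set Y : ℝ := y a with hYdef
  set m : ℝ := y b with hmdef
  have hYpos : 0 < Y := hy0 a haq.le
  have hmpos : 0 < m := hy0 b hbq.le
  have hYM : M * Y ^ 2 ≤ 1/4 := hyM a haq.le
  -- T ≤ Y^3 * S
  have hT : T ≤ Y ^ 3 * S := by
    rw [hTdef, hSdef, Finset.mul_sum]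
    apply Finset.sum_le_sum
    intro k hk
    have hkq : k < q := Finset.mem_range.mp hk
    have hy := hy0 k hkq.le
    have hle : y k ≤ Y := hmax k hk
    have h3 : y k ^ 3 ≤ Y ^ 3 := pow_le_pow_left₀ hy.le hle 3
    nlinarith
  -- deviation of y from y 0
  have hclose0 : ∀ k, k ≤ q → |y k - y 0| ≤ M * T := by
    intro k hk
    rw [hytel k hk]
    calc |∑ j ∈ Finset.range k, y j ^ 4 * h (x j) (y j)|
        ≤ ∑ j ∈ Finset.range k, |y j ^ 4 * h (x j) (y j)| :=
          Finset.abs_sum_le_sum_abs _ _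
      _ ≤ ∑ j ∈ Finset.range k, M * y j ^ 4 := by
          apply Finset.sum_le_sum
          intro j hj
          have hjq : j < q := lt_of_lt_of_le (Finset.mem_range.mp hj) hk
          have hy := hy0 j hjq.le
          rw [abs_mul, abs_of_pos (by positivity : (0:ℝ) < y j ^ 4)]
          have := hh (x j) (y j)
          have := mul_le_mul_of_nonneg_left (hh (x j) (y j)) (pow_nonneg hy.le 4)
          linarith
      _ ≤ ∑ j ∈ Finset.range q, M * y j ^ 4 := by
          apply Finset.sum_le_sum_of_subset_of_nonneg
            (Finset.range_subset_range.mpr hk)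
          intro j hj _
          have hjq : j < q := Finset.mem_range.mp hj
          have hy := hy0 j hjq.le
          positivity
      _ = M * T := by rw [hTdef, Finset.mul_sum]
  have hclose : ∀ i, i < q → ∀ j, j < q → |y i - y j| ≤ 2 * (M * T) := by
    intro i hi j hj
    calc |y i - y j| ≤ |y i - y 0| + |y 0 - y j| := abs_sub_le _ _ _
      _ ≤ M * T + M * T := by
          have h1 := hclose0 i hi.le
          have h2 := hclose0 j hj.le
          rw [abs_sub_comm (y 0) (y j)]
          linarith
      _ = 2 * (M * T) := by ring
  -- bootstrap: Y ≤ 3 m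
  have hY3m : Y ≤ 3 * m := by
    have h1 : Y - m ≤ 2 * (M * T) := by
      have := hclose a haq b hbq
      have := le_abs_self (Y - m)
      linarith
    have h2 : M * T ≤ M * (Y ^ 3 * S) := mul_le_mul_of_nonneg_left hT hMpos.le
    have h3 : M * (Y ^ 3 * S) ≤ (1/3) * Y := by
      have hA : M * Y ^ 2 * S ≤ (1/4) * S := mul_le_mul_of_nonneg_right hYM hSpos.le
      have hC : M * Y ^ 2 * S ≤ 1/3 := by linarith
      have hD := mul_le_mul_of_nonneg_left hC hYpos.le
      nlinarith [hD]
    linarith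
  -- q * m ≤ S ⇒ bounds on m and Y
  have hqm : (q:ℝ) * m ≤ S := by
    have : ∑ _k ∈ Finset.range q, m ≤ S := by
      rw [hSdef]
      exact Finset.sum_le_sum fun k hk => hmin k hk
    rwa [Finset.sum_const, Finset.card_range, nsmul_eq_mul] at this
  have hqY : (q:ℝ) * Y ≤ 4 := by
    nlinarith [mul_le_mul_of_nonneg_left hY3m hQ.le]
  have hqYnn : 0 ≤ (q:ℝ) * Y := by positivity
  -- quantitative bounds
  have hQ3T : (q:ℝ) ^ 3 * T ≤ 256/3 := by
    calc (q:ℝ) ^ 3 * T ≤ (q:ℝ) ^ 3 * (Y ^ 3 * S) :=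
          mul_le_mul_of_nonneg_left hT (by positivity)
      _ = ((q:ℝ) * Y) ^ 3 * S := by ring
      _ ≤ 4 ^ 3 * S := mul_le_mul_of_nonneg_right (pow_le_pow_left₀ hqYnn hqY 3) hSpos.le
      _ ≤ 4 ^ 3 * (4/3) := by linarith
      _ = 256/3 := by norm_num
  have hQ2Y2 : (q:ℝ) ^ 2 * Y ^ 2 ≤ 16 := by
    calc (q:ℝ) ^ 2 * Y ^ 2 = ((q:ℝ) * Y) ^ 2 := by ring
      _ ≤ 4 ^ 2 := pow_le_pow_left₀ hqYnn hqY 2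
      _ = 16 := by norm_num
  -- |S - 1| bound
  have hSdev : (q:ℝ) ^ 2 * |S - 1| ≤ 64 * M / 3 := by
    have h1 : |S - 1| ≤ M * (Y ^ 2 * S) := by
      have h2 : S - 1 = -∑ k ∈ Finset.range q, y k ^ 3 * g (x k) (y k) := by
        rw [hSdef, ← hxsum, ← Finset.sum_sub_distrib]
        rw [← Finset.sum_neg_distrib]
        apply Finset.sum_congr rfl
        intro k hk
        ring
      rw [h2, abs_neg]
      calc |∑ k ∈ Finset.range q, y k ^ 3 * g (x k) (y k)|
          ≤ ∑ k ∈ Finset.range q, |y k ^ 3 * g (x k) (y k)| :=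
            Finset.abs_sum_le_sum_abs _ _
        _ ≤ ∑ k ∈ Finset.range q, M * Y ^ 2 * y k := by
            apply Finset.sum_le_sum
            intro k hk
            have hkq : k < q := Finset.mem_range.mp hk
            have hy := hy0 k hkq.le
            have hle : y k ≤ Y := hmax k hk
            have hg' := hg (x k) (y k)
            rw [abs_mul, abs_of_pos (by positivity : (0:ℝ) < y k ^ 3)]
            have hy2 : y k ^ 2 ≤ Y ^ 2 := pow_le_pow_left₀ hy.le hle 2
            have hA := mul_le_mul_of_nonneg_left hg' (le_of_lt (pow_pos hy 3))
            have hB := mul_le_mul_of_nonneg_right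
              (mul_le_mul_of_nonneg_left hy2 hMpos.le) hy.le
            nlinarith [hA, hB]
        _ = M * (Y ^ 2 * S) := by
            rw [hSdef, Finset.mul_sum, Finset.mul_sum]
            exact Finset.sum_congr rfl fun _ _ => by ring
    calc (q:ℝ) ^ 2 * |S - 1| ≤ (q:ℝ) ^ 2 * (M * (Y ^ 2 * S)) :=
          mul_le_mul_of_nonneg_left h1 (by positivity)
      _ = M * ((q:ℝ) ^ 2 * Y ^ 2) * S := by ring
      _ ≤ M * 16 * (4/3) := by
            have hA := mul_le_mul_of_nonneg_right
              (mul_le_mul_of_nonneg_left hQ2Y2 hMpos.le) hSpos.le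
            have hB := mul_le_mul_of_nonneg_left hSup
              (by positivity : (0:ℝ) ≤ M * 16)
            nlinarith [hA, hB]
      _ = 64 * M / 3 := by ring
  -- |q y_k - S| bound
  have hdev : ∀ k, k < q → (q:ℝ) ^ 2 * |(q:ℝ) * y k - S| ≤ 512 * M / 3 := by
    intro k hk
    have h1 : (q:ℝ) * y k - S = ∑ j ∈ Finset.range q, (y k - y j) := by
      rw [Finset.sum_sub_distrib, Finset.sum_const, Finset.card_range, nsmul_eq_mul, hSdef]
    have h2 : |(q:ℝ) * y k - S| ≤ (q:ℝ) * (2 * (M * T)) := by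
      rw [h1]
      calc |∑ j ∈ Finset.range q, (y k - y j)| ≤ ∑ j ∈ Finset.range q, |y k - y j| :=
            Finset.abs_sum_le_sum_abs _ _
        _ ≤ ∑ _j ∈ Finset.range q, 2 * (M * T) :=
            Finset.sum_le_sum fun j hj => hclose k hk j (Finset.mem_range.mp hj)
        _ = (q:ℝ) * (2 * (M * T)) := by
            rw [Finset.sum_const, Finset.card_range, nsmul_eq_mul]
    calc (q:ℝ) ^ 2 * |(q:ℝ) * y k - S| ≤ (q:ℝ) ^ 2 * ((q:ℝ) * (2 * (M * T))) :=
          mul_le_mul_of_nonneg_left h2 (by positivity)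
      _ = 2 * M * ((q:ℝ) ^ 3 * T) := by ring
      _ ≤ 2 * M * (256/3) := by
            have hA := mul_le_mul_of_nonneg_left hQ3T
              (by positivity : (0:ℝ) ≤ 2 * M)
            linarith
      _ = 512 * M / 3 := by ring
  -- key bound on |q y_k - 1|
  have hkey : ∀ k, k < q → (q:ℝ) ^ 2 * |(q:ℝ) * y k - 1| ≤ 192 * M := by
    intro k hk
    have h1 := hdev k hk
    have h2 := hSdev
    have h3 : |(q:ℝ) * y k - 1| ≤ |(q:ℝ) * y k - S| + |S - 1| := by
      calc |(q:ℝ) * y k - 1| = |((q:ℝ) * y k - S) + (S - 1)| := by congr 1; ring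
        _ ≤ |(q:ℝ) * y k - S| + |S - 1| := abs_add_le _ _
    nlinarith [mul_le_mul_of_nonneg_left h3 (by positivity : (0:ℝ) ≤ (q:ℝ) ^ 2)]
  -- per-step bound for y
  have hykey : ∀ k, k < q → |y k - 1 / (q:ℝ)| ≤ 192 * M / (q:ℝ) ^ 3 := by
    intro k hk
    have habs : y k - 1 / (q:ℝ) = ((q:ℝ) * y k - 1) / (q:ℝ) := by
      field_simp
    rw [habs, abs_div, abs_of_pos hQ, div_le_div_iff₀ hQ (by positivity)]
    have := hkey k hk
    nlinarith [mul_le_mul_of_nonneg_right (hkey k hk) hQ.le]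
  -- per-step bound for the g-term
  have hgkey : ∀ k, k < q → |y k ^ 3 * g (x k) (y k)| ≤ 64 * M / (q:ℝ) ^ 3 := by
    intro k hk
    have hy := hy0 k hk.le
    have hle : y k ≤ Y := hmax k (Finset.mem_range.mpr hk)
    have hg' := hg (x k) (y k)
    rw [abs_mul, abs_of_pos (by positivity : (0:ℝ) < y k ^ 3), le_div_iff₀ (by positivity : (0:ℝ) < (q:ℝ)^3)]
    have h3 : ((q:ℝ) * y k) ^ 3 ≤ 4 ^ 3 := by
      apply pow_le_pow_left₀ (by positivity)
      nlinarith
    nlinarith [abs_nonneg (g (x k) (y k)), pow_pos hy 3, pow_pos hQ 3,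
      mul_le_mul_of_nonneg_left hg' (le_of_lt (pow_pos hy 3))]
  -- conclusion
  intro k hk
  constructor
  · calc |y k - 1 / (q:ℝ)| ≤ 192 * M / (q:ℝ) ^ 3 := hykey k hk
      _ < 300 * M / (q:ℝ) ^ 3 := by gcongr; linarith
  · -- x bound
    have hxk : x k - x 0 - (k:ℝ) / (q:ℝ) =
        ∑ j ∈ Finset.range k, ((y j - 1 / (q:ℝ)) + y j ^ 3 * g (x j) (y j)) := by
      rw [Finset.sum_add_distrib, Finset.sum_sub_distrib, Finset.sum_const,
        Finset.card_range, nsmul_eq_mul]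
      have := hxtel k hk.le
      rw [Finset.sum_add_distrib] at this
      rw [mul_one_div]
      linarith
    have hbound : |x k - x 0 - (k:ℝ) / (q:ℝ)| ≤ (k:ℝ) * (256 * M / (q:ℝ) ^ 3) := by
      rw [hxk]
      calc |∑ j ∈ Finset.range k, ((y j - 1 / (q:ℝ)) + y j ^ 3 * g (x j) (y j))|
          ≤ ∑ j ∈ Finset.range k, |(y j - 1 / (q:ℝ)) + y j ^ 3 * g (x j) (y j)| :=
            Finset.abs_sum_le_sum_abs _ _
        _ ≤ ∑ _j ∈ Finset.range k, (256 * M / (q:ℝ) ^ 3) := by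
            apply Finset.sum_le_sum
            intro j hj
            have hjq : j < q := lt_trans (Finset.mem_range.mp hj) hk
            have h1 := hykey j hjq
            have h2 := hgkey j hjq
            have h3 := abs_add_le (y j - 1 / (q:ℝ)) (y j ^ 3 * g (x j) (y j))
            have : 192 * M / (q:ℝ)^3 + 64 * M / (q:ℝ)^3 = 256 * M / (q:ℝ)^3 := by ring
            linarith
        _ = (k:ℝ) * (256 * M / (q:ℝ) ^ 3) := by
            rw [Finset.sum_const, Finset.card_range, nsmul_eq_mul]
    have hkq : (k:ℝ) ≤ (q:ℝ) := by exact_mod_cast hk.le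
    calc |x k - x 0 - (k:ℝ) / (q:ℝ)| ≤ (k:ℝ) * (256 * M / (q:ℝ) ^ 3) := hbound
      _ ≤ (q:ℝ) * (256 * M / (q:ℝ) ^ 3) := by
          apply mul_le_mul_of_nonneg_right hkq (by positivity)
      _ = 256 * M / (q:ℝ) ^ 2 := by field_simp
      _ < 300 * M / (q:ℝ) ^ 2 := by gcongr; linarith
end

section
/- For every C > 0 there exists C′ > 0, depending only on C, such that the following holds. Let 0 < ε ≤ 2⁻⁹ and let (a_q)_{q≥5} be a sequence of real numbers satisfying: |a_q| ≤ C·q⁸·ε² for every integer q with 5 ≤ q ≤ ε^{−1/9}, and |a_q| ≤ C·ε/q for every integer q ≥ 5. Then Σ_{q=5}^∞ a_q² ≤ C′·ε^{19/9}. -/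
/-!
Split the series at the cutoff `X = ε^{-1/9}`. The at most `X` terms with `q ≤ X` are each
bounded by `C² ε⁴ X¹⁶`, contributing `C² ε⁴ X¹⁷ = C² ε^{19/9}`; the terms with `q > X` are bounded
by `C² ε² / q²`, and `∑_{q > X} 1/q² ≤ 2/X` gives `2 C² ε² / X = 2 C² ε^{19/9}`.
-/

open Finset

section TwoRegimes

variable {u : ℕ → ℝ} {q₀ p : ℕ} {A B X : ℝ}

theorem sum_Ico_filter_le_floor_le (hq₀ : 1 ≤ q₀) (hX : 0 ≤ X) (hA : 0 ≤ A)
    (hsmall : ∀ q, q₀ ≤ q → (q : ℝ) ≤ X → u q ≤ A * q ^ p) (n : ℕ) :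
    ∑ q ∈ Ico q₀ n with q ≤ ⌊X⌋₊, u q ≤ A * X ^ (p + 1) := by
  set K := ⌊X⌋₊
  have hKX : (K : ℝ) ≤ X := Nat.floor_le hX
  have hcard : #{q ∈ Ico q₀ n | q ≤ K} ≤ K := by
    calc #{q ∈ Ico q₀ n | q ≤ K} ≤ #(Icc 1 K) :=
          card_le_card fun q hq => by simp only [mem_filter, mem_Ico, mem_Icc] at hq ⊢; omega
      _ = K := by simp
  calc ∑ q ∈ Ico q₀ n with q ≤ K, u q ≤ ∑ q ∈ Ico q₀ n with q ≤ K, A * (K : ℝ) ^ p := by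
        refine sum_le_sum fun q hq => ?_
        obtain ⟨⟨hq₀q, -⟩, hqK⟩ := by simpa only [mem_filter, mem_Ico] using hq
        calc u q ≤ A * q ^ p := hsmall q hq₀q (le_trans (by exact_mod_cast hqK) hKX)
          _ ≤ A * K ^ p := by gcongr
    _ ≤ K * (A * K ^ p) := by rw [sum_const, nsmul_eq_mul]; gcongr
    _ ≤ A * X ^ (p + 1) := by rw [← mul_assoc, mul_comm _ A, mul_assoc, ← pow_succ']; gcongr

theorem sum_Ico_filter_floor_lt_le (hX : 0 < X) (hB : 0 ≤ B)
    (hlarge : ∀ q, q₀ ≤ q → u q ≤ B / q ^ 2) (n : ℕ) :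
    ∑ q ∈ Ico q₀ n with ¬q ≤ ⌊X⌋₊, u q ≤ 2 * B / X := by
  set K := ⌊X⌋₊
  calc ∑ q ∈ Ico q₀ n with ¬q ≤ K, u q ≤ ∑ q ∈ Ico q₀ n with ¬q ≤ K, B * ((q : ℝ) ^ 2)⁻¹ := by
        refine sum_le_sum fun q hq => ?_
        simp only [mem_filter, mem_Ico] at hq
        exact (hlarge q hq.1.1).trans_eq (div_eq_mul_inv _ _)
    _ ≤ ∑ q ∈ Ioo K n, B * ((q : ℝ) ^ 2)⁻¹ := by
        refine sum_le_sum_of_subset_of_nonneg (fun q hq => ?_) fun _ _ _ => by positivity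
        simp only [mem_filter, mem_Ico, mem_Ioo] at hq ⊢
        omega
    _ = B * ∑ q ∈ Ioo K n, ((q : ℝ) ^ 2)⁻¹ := (mul_sum _ _ _).symm
    _ ≤ B * (2 / (K + 1)) := by gcongr; exact sum_Ioo_inv_sq_le K n
    _ ≤ 2 * B / X := by
        rw [mul_div, mul_comm B]
        gcongr
        exact (Nat.lt_floor_add_one X).le

theorem sum_Ico_le_of_le_pow_of_le_div_sq (hq₀ : 1 ≤ q₀) (hX : 0 < X) (hA : 0 ≤ A)
    (hB : 0 ≤ B) (hsmall : ∀ q, q₀ ≤ q → (q : ℝ) ≤ X → u q ≤ A * q ^ p)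
    (hlarge : ∀ q, q₀ ≤ q → u q ≤ B / q ^ 2) (n : ℕ) :
    ∑ q ∈ Ico q₀ n, u q ≤ A * X ^ (p + 1) + 2 * B / X := by
  rw [← sum_filter_add_sum_filter_not _ (· ≤ ⌊X⌋₊)]
  exact add_le_add (sum_Ico_filter_le_floor_le hq₀ hX.le hA hsmall n)
    (sum_Ico_filter_floor_lt_le hX hB hlarge n)

theorem summable_and_tsum_le_of_le_pow_of_le_div_sq (hq₀ : 1 ≤ q₀) (hX : 0 < X) (hA : 0 ≤ A)
    (hB : 0 ≤ B) (hu : ∀ q, q₀ ≤ q → 0 ≤ u q)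
    (hsmall : ∀ q, q₀ ≤ q → (q : ℝ) ≤ X → u q ≤ A * q ^ p)
    (hlarge : ∀ q, q₀ ≤ q → u q ≤ B / q ^ 2) :
    Summable (fun n => u (n + q₀)) ∧ ∑' n, u (n + q₀) ≤ A * X ^ (p + 1) + 2 * B / X := by
  have hu' : ∀ n, 0 ≤ u (n + q₀) := fun n => hu _ (Nat.le_add_left _ _)
  have hpartial : ∀ N, ∑ n ∈ range N, u (n + q₀) ≤ A * X ^ (p + 1) + 2 * B / X := by
    intro N
    have := sum_Ico_le_of_le_pow_of_le_div_sq hq₀ hX hA hB hsmall hlarge (N + q₀)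
    rw [sum_Ico_eq_sum_range, Nat.add_sub_cancel] at this
    simpa only [add_comm q₀] using this
  exact ⟨summable_of_sum_range_le hu' hpartial, Real.tsum_le_of_sum_range_le hu' hpartial⟩

end TwoRegimes

/-- Core summation estimate in the proof of Lemma 8.1: if the coefficients `a_q`
satisfy `|a_q| ≤ C q⁸ ε²` up to the cutoff `q ≤ ε^{-1/9}` and `|a_q| ≤ C ε / q`
for all `q ≥ 5`, then `∑_{q≥5} a_q² ≤ C' ε^{19/9}`. -/
theorem stmt9 (C : ℝ) (hC : 0 < C) :
    ∃ C' : ℝ, 0 < C' ∧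
      ∀ ε : ℝ, 0 < ε → ε ≤ (2 : ℝ) ^ (-9 : ℤ) →
        ∀ a : ℕ → ℝ,
          (∀ q : ℕ, 5 ≤ q → (q : ℝ) ≤ ε ^ (-(1 / 9) : ℝ) →
            |a q| ≤ C * (q : ℝ) ^ 8 * ε ^ 2) →
          (∀ q : ℕ, 5 ≤ q → |a q| ≤ C * ε / q) →
          Summable (fun q : ℕ => (a (q + 5)) ^ 2) ∧
          ∑' q : ℕ, (a (q + 5)) ^ 2 ≤ C' * ε ^ ((19 : ℝ) / 9) := by
  refine ⟨3 * C ^ 2, by positivity, fun ε hε _ a hsmall hlarge => ?_⟩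
  set X := ε ^ (-(1 / 9) : ℝ)
  have hX : 0 < X := Real.rpow_pos_of_pos hε _
  have hsq {x b : ℝ} (h : |x| ≤ b) : x ^ 2 ≤ b ^ 2 := sq_le_sq.2 (h.trans (le_abs_self b))
  obtain ⟨hsum, hle⟩ := summable_and_tsum_le_of_le_pow_of_le_div_sq (u := fun q => a q ^ 2)
    (p := 16) (A := C ^ 2 * ε ^ 4) (B := C ^ 2 * ε ^ 2) (by norm_num) hX
    (by positivity) (by positivity) (fun _ _ => sq_nonneg _)
    (fun q hq hqX => (hsq (hsmall q hq hqX)).trans_eq (by ring))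
    (fun q hq => (hsq (hlarge q hq)).trans_eq (by ring))
  refine ⟨hsum, hle.trans_eq ?_⟩
  have hhead : ε ^ 4 * X ^ (16 + 1) = ε ^ ((19 : ℝ) / 9) := by
    rw [← Real.rpow_natCast, ← Real.rpow_natCast, ← Real.rpow_mul hε.le, ← Real.rpow_add hε]
    norm_num
  have htail : ε ^ 2 / X = ε ^ ((19 : ℝ) / 9) := by
    rw [← Real.rpow_natCast, ← Real.rpow_sub hε]
    norm_num
  linear_combination C ^ 2 * hhead + 2 * C ^ 2 * htail
end

section
/- Let G : ℝ → ℝ be a 1-periodic continuously differentiable function, q ≥ 1 an integer, C* ≥ 0, and a : ℝ → ℝ a measurable function such that |a(x) − cos(2πqx)| ≤ C*/q for all x ∈ [0,1]. Then |∫₀¹ G(x)·a(x) dx| ≤ (1/q)·( C*·sup_{x∈[0,1]}|G(x)| + (1/(2π))·sup_{x∈[0,1]}|G′(x)| ). The same bound holds if cos(2πqx) is replaced by sin(2πqx) in the hypothesis on a. -/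
/-!
Let `T` be the trigonometric mode that `a` approximates and `F` its antiderivative
(`sin (2πqx) / (2πq)` or `-cos (2πqx) / (2πq)`), which is `1`-periodic and bounded by `1 / (2πq)`.
Split `∫ G a = ∫ G (a - T) + ∫ G T`. The first term is at most `sup |G| · C* / q`. Integrating
the second by parts, the boundary terms cancel by periodicity and `∫ G T = -∫ G' F`, which is at
most `sup |G'| / (2πq)`.
-/

open MeasureTheory intervalIntegral Set Real

section IntervalBounds

variable {a b : ℝ}

theorem abs_le_sSup_image_abs {g : ℝ → ℝ} (hg : ContinuousOn g (Icc a b)) {x : ℝ}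
    (hx : x ∈ Icc a b) : |g x| ≤ sSup ((fun x => |g x|) '' Icc a b) :=
  le_csSup (isCompact_Icc.bddAbove_image hg.abs) (mem_image_of_mem _ hx)

theorem abs_intervalIntegral_le_of_abs_le {φ : ℝ → ℝ} {C : ℝ} (hab : a ≤ b)
    (hφ : ∀ x ∈ Icc a b, |φ x| ≤ C) : |∫ x in a..b, φ x| ≤ C * (b - a) := by
  have h := norm_integral_le_of_norm_le_const (f := φ) fun x hx =>
    hφ x (Ioc_subset_Icc_self (by rwa [uIoc_of_le hab] at hx))
  rwa [Real.norm_eq_abs, abs_of_nonneg (sub_nonneg.2 hab)] at h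

theorem abs_mul_le_of_abs_le {g f : ℝ → ℝ} {M K : ℝ} (hab : a ≤ b)
    (hgM : ∀ x ∈ Icc a b, |g x| ≤ M) (hfK : ∀ x ∈ Icc a b, |f x| ≤ K) :
    ∀ x ∈ Icc a b, |g x * f x| ≤ M * K := fun x hx => by
  have hM : 0 ≤ M := (abs_nonneg _).trans (hgM a (left_mem_Icc.2 hab))
  rw [abs_mul]
  exact mul_le_mul (hgM x hx) (hfK x hx) (abs_nonneg _) hM

theorem intervalIntegrable_of_abs_sub_le {f h : ℝ → ℝ} {ε : ℝ} (hab : a ≤ b)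
    (hf : Measurable f) (hh : ContinuousOn h (Icc a b))
    (hfh : ∀ x ∈ Icc a b, |f x - h x| ≤ ε) : IntervalIntegrable f volume a b := by
  obtain ⟨K, hK⟩ := isCompact_Icc.exists_bound_of_continuousOn hh
  refine (intervalIntegrable_const (c := K + ε)).mono_fun' hf.aestronglyMeasurable ?_
  rw [uIoc_of_le hab]
  filter_upwards [ae_restrict_mem measurableSet_Ioc] with x hx
  have hx := Ioc_subset_Icc_self hx
  calc ‖f x‖ = |h x + (f x - h x)| := by rw [Real.norm_eq_abs, add_sub_cancel]
    _ ≤ K + ε := (abs_add_le _ _).trans (add_le_add (hK x hx) (hfh x hx))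

theorem abs_intervalIntegral_mul_sub_le {g f h : ℝ → ℝ} {M ε : ℝ} (hab : a ≤ b)
    (hg : ContinuousOn g (Icc a b)) (hf : Measurable f) (hh : ContinuousOn h (Icc a b))
    (hgM : ∀ x ∈ Icc a b, |g x| ≤ M) (hfh : ∀ x ∈ Icc a b, |f x - h x| ≤ ε) :
    |(∫ x in a..b, g x * f x) - ∫ x in a..b, g x * h x| ≤ M * ε * (b - a) := by
  have hg' : ContinuousOn g (uIcc a b) := uIcc_of_le hab ▸ hg
  have hh' : ContinuousOn h (uIcc a b) := uIcc_of_le hab ▸ hh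
  rw [← integral_sub ((intervalIntegrable_of_abs_sub_le hab hf hh hfh).continuousOn_mul hg')
    (hh'.intervalIntegrable.continuousOn_mul hg')]
  refine abs_intervalIntegral_le_of_abs_le hab fun x hx => ?_
  rw [← mul_sub]
  exact abs_mul_le_of_abs_le hab hgM hfh x hx

theorem abs_intervalIntegral_mul_deriv_le {g g' F T : ℝ → ℝ} {M K : ℝ} (hab : a ≤ b)
    (hg : ∀ x ∈ uIcc a b, HasDerivAt g (g' x) x) (hF : ∀ x ∈ uIcc a b, HasDerivAt F (T x) x)
    (hg' : IntervalIntegrable g' volume a b) (hT : IntervalIntegrable T volume a b)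
    (hgF : g b * F b = g a * F a) (hg'M : ∀ x ∈ Icc a b, |g' x| ≤ M)
    (hFK : ∀ x ∈ Icc a b, |F x| ≤ K) : |∫ x in a..b, g x * T x| ≤ M * K * (b - a) := by
  rw [integral_mul_deriv_eq_deriv_mul hg hF hg' hT, hgF, sub_self, zero_sub, abs_neg]
  exact abs_intervalIntegral_le_of_abs_le hab (abs_mul_le_of_abs_le hab hg'M hFK)

theorem abs_intervalIntegral_mul_le_of_abs_sub_le {G f T F : ℝ → ℝ} {ε K : ℝ} (hab : a ≤ b)
    (hG : ContDiff ℝ 1 G) (hGab : G b = G a) (hf : Measurable f) (hT : Continuous T)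
    (hF : ∀ x, HasDerivAt F (T x) x) (hFab : F b = F a) (hFK : ∀ x ∈ Icc a b, |F x| ≤ K)
    (hfT : ∀ x ∈ Icc a b, |f x - T x| ≤ ε) :
    |∫ x in a..b, G x * f x|
      ≤ (sSup ((fun x => |G x|) '' Icc a b) * ε
          + sSup ((fun x => |deriv G x|) '' Icc a b) * K) * (b - a) := by
  have hG' : Continuous (deriv G) := hG.continuous_deriv le_rfl
  have hperturb := abs_intervalIntegral_mul_sub_le hab hG.continuous.continuousOn hf
    hT.continuousOn (fun x => abs_le_sSup_image_abs hG.continuous.continuousOn) hfT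
  have hparts := abs_intervalIntegral_mul_deriv_le hab
    (fun x _ => (hG.differentiable one_ne_zero x).hasDerivAt) (fun x _ => hF x)
    (hG'.intervalIntegrable a b) (hT.intervalIntegrable a b) (by rw [hGab, hFab])
    (fun x => abs_le_sSup_image_abs hG'.continuousOn) hFK
  have htriangle := abs_sub_abs_le_abs_sub (∫ x in a..b, G x * f x) (∫ x in a..b, G x * T x)
  linarith

end IntervalBounds

theorem hasDerivAt_sin_mul_div {ω : ℝ} (hω : ω ≠ 0) (x : ℝ) :
    HasDerivAt (fun x => sin (ω * x) / ω) (cos (ω * x)) x := by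
  simpa [hω] using ((hasDerivAt_id x).const_mul ω).sin.div_const ω

theorem hasDerivAt_neg_cos_mul_div {ω : ℝ} (hω : ω ≠ 0) (x : ℝ) :
    HasDerivAt (fun x => -cos (ω * x) / ω) (sin (ω * x)) x := by
  simpa [hω] using ((hasDerivAt_id x).const_mul ω).cos.neg.div_const ω

theorem stmt10_general (G : ℝ → ℝ) (hper : ∀ x : ℝ, G (x + 1) = G x) (hG : ContDiff ℝ 1 G)
    (q : ℕ) (hq : 1 ≤ q) (Cs : ℝ)
    (a : ℝ → ℝ) (hmeas : Measurable a)
    (ha : (∀ x ∈ Set.Icc (0 : ℝ) 1, |a x - Real.cos (2 * Real.pi * q * x)| ≤ Cs / q) ∨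
          (∀ x ∈ Set.Icc (0 : ℝ) 1, |a x - Real.sin (2 * Real.pi * q * x)| ≤ Cs / q)) :
    |∫ x in (0:ℝ)..1, G x * a x|
      ≤ (1 / q) * (Cs * sSup ((fun x => |G x|) '' Set.Icc (0 : ℝ) 1)
          + (1 / (2 * Real.pi)) * sSup ((fun x => |deriv G x|) '' Set.Icc (0 : ℝ) 1)) := by
  have hω : 0 < 2 * π * q := by positivity
  have hG01 : G 1 = G 0 := by simpa using hper 0
  have hrhs (M M' : ℝ) : (M * (Cs / q) + M' * (1 / (2 * π * q))) * (1 - 0)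
      = 1 / q * (Cs * M + 1 / (2 * π) * M') := by
    rw [sub_zero, mul_one]
    field_simp
  rcases ha with ha | ha
  · refine (abs_intervalIntegral_mul_le_of_abs_sub_le zero_le_one hG hG01 hmeas (by fun_prop)
      (hasDerivAt_sin_mul_div hω.ne') ?_ (fun x _ => ?_) ha).trans_eq (hrhs _ _)
    · rw [mul_one, mul_zero, mul_comm, sin_periodic.nat_mul_eq]
    · rw [abs_div, abs_of_pos hω]
      gcongr
      exact abs_sin_le_one _
  · refine (abs_intervalIntegral_mul_le_of_abs_sub_le zero_le_one hG hG01 hmeas (by fun_prop)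
      (hasDerivAt_neg_cos_mul_div hω.ne') ?_ (fun x _ => ?_) ha).trans_eq (hrhs _ _)
    · rw [mul_one, mul_zero, mul_comm, cos_periodic.nat_mul_eq]
    · rw [abs_div, abs_of_pos hω, abs_neg]
      gcongr
      exact abs_cos_le_one _

/-- Lemma 5.8 (decay of generalized Fourier coefficients): if `a` is uniformly `C*/q`-close
on `[0,1]` to `cos(2πq·)` (or to `sin(2πq·)`), then for any 1-periodic `C¹` function `G`,
`|∫₀¹ G a| ≤ (1/q)(C*·sup|G| + (1/2π)·sup|G'|)`. -/
theorem stmt10 (G : ℝ → ℝ) (hper : ∀ x : ℝ, G (x + 1) = G x) (hG : ContDiff ℝ 1 G)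
    (q : ℕ) (hq : 1 ≤ q) (Cs : ℝ) (hCs : 0 ≤ Cs)
    (a : ℝ → ℝ) (hmeas : Measurable a)
    (ha : (∀ x ∈ Set.Icc (0 : ℝ) 1, |a x - Real.cos (2 * Real.pi * q * x)| ≤ Cs / q) ∨
          (∀ x ∈ Set.Icc (0 : ℝ) 1, |a x - Real.sin (2 * Real.pi * q * x)| ≤ Cs / q)) :
    |∫ x in (0:ℝ)..1, G x * a x|
      ≤ (1 / q) * (Cs * sSup ((fun x => |G x|) '' Set.Icc (0 : ℝ) 1)
          + (1 / (2 * Real.pi)) * sSup ((fun x => |deriv G x|) '' Set.Icc (0 : ℝ) 1)) :=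
  stmt10_general G hper hG q hq Cs a hmeas ha
end

section
/- Let q ≥ 1 be an integer, C ≥ 0 and M ≥ 0 real numbers, and f : ℝ → ℝ a three times continuously differentiable function such that f(θ + 1) = f(θ) + 1 for all θ ∈ ℝ, |f′′′(θ)| ≤ M for all θ ∈ ℝ, and |f((k+1)/q) − f(k/q) − 1/q| ≤ C/q³ for every integer k. Then |f′(θ) − 1| ≤ (C + M)/q² for every θ ∈ ℝ. -/
/-!
At a critical point `θ₀` of `f′`, the bound on `f′′′` makes `f′` vary by at most `M/q²` on the grid
cell `[k/q, (k+1)/q]` containing `θ₀`, so by the mean value theorem the increment of `f` over that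
cell is `f′(θ₀)/q` up to `M/q³`; comparing with the grid hypothesis gives `|f′(θ₀) − 1| ≤ (C+M)/q²`.
Since `f − Id` is `1`-periodic, so is `f′`, and its maximum and minimum are attained at critical
points, so the bound holds everywhere.
-/

open Set

theorem periodic_deriv_of_add_const {f : ℝ → ℝ} {c d : ℝ} (h : ∀ x, f (x + c) = f x + d) :
    Function.Periodic (deriv f) c := by
  intro x
  rw [← deriv_comp_add_const, funext h, deriv_add_const]

theorem Function.Periodic.abs_sub_le_of_forall_deriv_eq_zero {g : ℝ → ℝ} {c y ε : ℝ}
    (hp : Periodic g c) (hc : c ≠ 0) (hg : Differentiable ℝ g)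
    (h : ∀ x, deriv g x = 0 → |g x - y| ≤ ε) (x : ℝ) : |g x - y| ≤ ε := by
  have hrange := hp.compact_of_continuous hc hg.continuous
  obtain ⟨_, ⟨xmax, rfl⟩, hmax⟩ := hrange.exists_isGreatest (range_nonempty g)
  obtain ⟨_, ⟨xmin, rfl⟩, hmin⟩ := hrange.exists_isLeast (range_nonempty g)
  have hcrit_max : deriv g xmax = 0 :=
    IsLocalMax.deriv_eq_zero (Filter.Eventually.of_forall fun z => hmax ⟨z, rfl⟩)
  have hcrit_min : deriv g xmin = 0 :=
    IsLocalMin.deriv_eq_zero (Filter.Eventually.of_forall fun z => hmin ⟨z, rfl⟩)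
  have hup := (abs_le.1 (h xmax hcrit_max)).2
  have hlow := (abs_le.1 (h xmin hcrit_min)).1
  exact abs_le.2 ⟨by linarith [hmin ⟨x, rfl⟩], by linarith [hmax ⟨x, rfl⟩]⟩

theorem abs_sub_le_mul_sq_of_deriv_eq_zero {g : ℝ → ℝ} {M x₀ : ℝ} (hg : Differentiable ℝ g)
    (hg' : Differentiable ℝ (deriv g)) (hM : ∀ x, |deriv (deriv g) x| ≤ M)
    (hx₀ : deriv g x₀ = 0) (x : ℝ) : |g x - g x₀| ≤ M * (x - x₀) ^ 2 := by
  have hM₀ : 0 ≤ M := (abs_nonneg _).trans (hM x₀)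
  have hderiv : ∀ y, |deriv g y| ≤ M * |y - x₀| := fun y => by
    simpa [hx₀] using convex_univ.norm_image_sub_le_of_norm_deriv_le (fun z _ => hg' z)
      (fun z _ => hM z) (mem_univ x₀) (mem_univ y)
  have hbound : ∀ y ∈ uIcc x₀ x, ‖deriv g y‖ ≤ M * |x - x₀| := fun y hy =>
    (hderiv y).trans (mul_le_mul_of_nonneg_left (abs_sub_left_of_mem_uIcc hy) hM₀)
  calc |g x - g x₀| ≤ M * |x - x₀| * |x - x₀| :=
        (convex_uIcc x₀ x).norm_image_sub_le_of_norm_deriv_le (fun z _ => hg z) hbound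
          left_mem_uIcc right_mem_uIcc
    _ = M * (x - x₀) ^ 2 := by rw [mul_assoc, ← sq, sq_abs]

theorem abs_sub_sub_mul_le_of_abs_deriv_sub_le {f : ℝ → ℝ} {a b c K : ℝ} (hab : a ≤ b)
    (hf : Differentiable ℝ f) (hK : ∀ x ∈ Icc a b, |deriv f x - c| ≤ K) :
    |f b - f a - (b - a) * c| ≤ K * (b - a) := by
  have hmvt := (convex_Icc a b).norm_image_sub_le_of_norm_hasDerivWithin_le
    (f := fun x => f x - x * c)
    (fun x _ => ((hf x).hasDerivAt.sub (hasDerivAt_mul_const c)).hasDerivWithinAt) hK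
    (left_mem_Icc.2 hab) (right_mem_Icc.2 hab)
  rw [Real.norm_eq_abs, Real.norm_eq_abs, abs_of_nonneg (sub_nonneg.2 hab)] at hmvt
  calc |f b - f a - (b - a) * c| = |f b - b * c - (f a - a * c)| := by congr 1; ring
    _ ≤ K * (b - a) := hmvt

theorem abs_deriv_sub_one_le_of_deriv_deriv_eq_zero {f : ℝ → ℝ} {C M a h θ₀ : ℝ}
    (hf : Differentiable ℝ f) (hf' : Differentiable ℝ (deriv f))
    (hf'' : Differentiable ℝ (deriv (deriv f))) (hM : ∀ x, |deriv (deriv (deriv f)) x| ≤ M)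
    (hθ₀ : deriv (deriv f) θ₀ = 0) (hh : 0 < h) (ha : a ≤ θ₀) (hah : θ₀ ≤ a + h)
    (hstep : |f (a + h) - f a - h| ≤ C * h ^ 3) : |deriv f θ₀ - 1| ≤ (C + M) * h ^ 2 := by
  have hM₀ : 0 ≤ M := (abs_nonneg _).trans (hM θ₀)
  have hclose : ∀ x ∈ Icc a (a + h), |deriv f x - deriv f θ₀| ≤ M * h ^ 2 := fun x hx =>
    (abs_sub_le_mul_sq_of_deriv_eq_zero hf' hf'' hM hθ₀ x).trans <|
      mul_le_mul_of_nonneg_left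
        (sq_le_sq' (by linarith [hx.1]) (by linarith [hx.2])) hM₀
  have hmvt := abs_sub_sub_mul_le_of_abs_deriv_sub_le (by linarith) hf hclose
  rw [add_sub_cancel_left] at hmvt
  refine le_of_mul_le_mul_left ?_ hh
  calc h * |deriv f θ₀ - 1| = |h * (deriv f θ₀ - 1)| := by rw [abs_mul, abs_of_pos hh]
    _ = |(f (a + h) - f a - h) - (f (a + h) - f a - h * deriv f θ₀)| := by congr 1; ring
    _ ≤ C * h ^ 3 + M * h ^ 2 * h := (abs_sub _ _).trans (add_le_add hstep hmvt)
    _ = h * ((C + M) * h ^ 2) := by ring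

theorem stmt12_general (q : ℕ) (hq : 1 ≤ q) (C M : ℝ)
    (f : ℝ → ℝ) (hf : ContDiff ℝ 3 f)
    (hlift : ∀ θ : ℝ, f (θ + 1) = f θ + 1)
    (hM3 : ∀ θ : ℝ, |iteratedDeriv 3 f θ| ≤ M)
    (hgrid : ∀ k : ℤ, |f (((k : ℝ) + 1) / q) - f ((k : ℝ) / q) - 1 / q| ≤ C / q ^ 3) :
    ∀ θ : ℝ, |deriv f θ - 1| ≤ (C + M) / q ^ 2 := by
  have hq₀ : (0 : ℝ) < q := by exact_mod_cast hq
  have hf₁ : Differentiable ℝ f := hf.differentiable (by norm_num)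
  have hf₂ : Differentiable ℝ (deriv f) := by
    simpa using hf.differentiable_iteratedDeriv 1 (by norm_num)
  have hf₃ : Differentiable ℝ (deriv (deriv f)) := by
    simpa [iteratedDeriv_succ] using hf.differentiable_iteratedDeriv 2 (by norm_num)
  have hM : ∀ θ, |deriv (deriv (deriv f)) θ| ≤ M := by simpa [iteratedDeriv_succ] using hM3
  refine (periodic_deriv_of_add_const hlift).abs_sub_le_of_forall_deriv_eq_zero one_ne_zero hf₂ ?_
  intro θ₀ hθ₀
  set k := ⌊θ₀ * q⌋
  have hk : (k : ℝ) / q ≤ θ₀ := (div_le_iff₀ hq₀).2 (Int.floor_le _)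
  have hk' : θ₀ ≤ k / q + 1 / q := by
    rw [← add_div, le_div_iff₀ hq₀]; exact (Int.lt_floor_add_one _).le
  have hstep : |f (k / q + 1 / q) - f (k / q) - 1 / q| ≤ C * (1 / q) ^ 3 := by
    rw [← add_div]; convert hgrid k using 1; ring
  convert abs_deriv_sub_one_le_of_deriv_deriv_eq_zero hf₁ hf₂ hf₃ hM hθ₀ (one_div_pos.2 hq₀)
    hk hk' hstep using 1
  ring

/-- Analytic core of Lemma 5.5: a `C³` lift of a circle map whose values on the grid
`k/q` are `C/q³`-close to a rigid rotation by `1/q`, and whose third derivative is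
bounded by `M`, has derivative `(C+M)/q²`-close to `1` everywhere. -/
theorem stmt12 (q : ℕ) (hq : 1 ≤ q) (C M : ℝ) (hC : 0 ≤ C) (hM : 0 ≤ M)
    (f : ℝ → ℝ) (hf : ContDiff ℝ 3 f)
    (hlift : ∀ θ : ℝ, f (θ + 1) = f θ + 1)
    (hM3 : ∀ θ : ℝ, |iteratedDeriv 3 f θ| ≤ M)
    (hgrid : ∀ k : ℤ, |f (((k : ℝ) + 1) / q) - f ((k : ℝ) / q) - 1 / q| ≤ C / q ^ 3) :
    ∀ θ : ℝ, |deriv f θ - 1| ≤ (C + M) / q ^ 2 :=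
  stmt12_general q hq C M f hf hlift hM3 hgrid
end
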